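/- arXiv:1310.4188 — 3 statements merged into one kernel-verified Lean document; each statement's English description precedes it below -/
import Mathlib

section
/- Fix 0 < x₁ < x₂ < ⋯ < xₙ < 1 with the conventions x₀ = 0, x_{n+1} = 1, and n ≥ 2. On a probability space, let r₁,…,rₙ, l₁,…,lₙ be random variables with r_k uniformly distributed on [x_k, x_{k+1}] and l_k uniformly distributed on [x_{k−1}, x_k], and let w^c_k, w^l_k, w^r_k (k = 1,…,n) be bounded random variables with mean zero; assume all of these random variables are jointly independent. Define L_k = (ρ(l_k) + w^l_k)·(x_k − x_{k−1}), R_k = (ρ(r_k) + w^r_k)·(x_{k+1} − x_k), and the random vector ḡ ∈ ℝⁿ by ḡ₁ = (ρ(x₁) + w^c₁)·(4L₁ − 2R₁), ḡ_k = (ρ(x_k) + w^c_k)·(2L_k − 2R_k) for 2 ≤ k ≤ n−1, and ḡₙ = (ρ(xₙ) + w^c_n)·(2Lₙ − 4Rₙ). Then E[ḡ] = ∇Q(x), the gradient of Q at x = (x₁,…,xₙ). -/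
open intervalIntegral MeasureTheory

/-- `F(x) = ∫₀ˣ ρ(z) dz`. -/
noncomputable def Fint (ρ : ℝ → ℝ) (t : ℝ) : ℝ := ∫ z in (0 : ℝ)..t, ρ z

/-- The Lyapunov function
`Q(x₁,…,xₙ) = 2 F(x₁)² + Σ_{i=1}^{n-1} (F(x_{i+1}) - F(x_i))² + 2 (F(1) - F(xₙ))²`,
for `n+1` agents. -/
noncomputable def Qfun (ρ : ℝ → ℝ) (n : ℕ) (x : EuclideanSpace ℝ (Fin (n + 1))) : ℝ :=
  2 * (Fint ρ (x 0)) ^ 2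
    + (∑ i : Fin n, (Fint ρ (x i.succ) - Fint ρ (x i.castSucc)) ^ 2)
    + 2 * (Fint ρ 1 - Fint ρ (x (Fin.last n))) ^ 2


lemma Fint_hasDerivAt (ρ : ℝ → ℝ) (hρ : Continuous ρ) (t : ℝ) :
    HasDerivAt (Fint ρ) (ρ t) t :=
  intervalIntegral.integral_hasDerivAt_right (hρ.intervalIntegrable _ _)
    hρ.aestronglyMeasurable.stronglyMeasurableAtFilter hρ.continuousAt

lemma Fint_sub (ρ : ℝ → ℝ) (hρ : Continuous ρ) (a b : ℝ) :
    Fint ρ b - Fint ρ a = ∫ z in a..b, ρ z :=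
  intervalIntegral.integral_interval_sub_left (hρ.intervalIntegrable _ _)
    (hρ.intervalIntegrable _ _)

lemma unif_integral {Ω : Type*} [MeasurableSpace Ω] (μ : MeasureTheory.Measure Ω)
    [MeasureTheory.IsProbabilityMeasure μ]
    {a b : ℝ} (hab : a < b) {X : Ω → ℝ} (hX : Measurable X)
    (hu : MeasureTheory.pdf.IsUniform X (Set.Icc a b) μ) (f : ℝ → ℝ) (hf : Continuous f) :
    (∫ ω, f (X ω) ∂μ) * (b - a) = ∫ t in a..b, f t := by
  have h1 : ∫ ω, f (X ω) ∂μ = ∫ y, f y ∂(MeasureTheory.Measure.map X μ) :=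
    (MeasureTheory.integral_map hX.aemeasurable hf.aestronglyMeasurable).symm
  rw [h1, hu]
  unfold ProbabilityTheory.cond
  rw [MeasureTheory.integral_smul_measure, Real.volume_Icc, smul_eq_mul,
    ENNReal.toReal_inv, ENNReal.toReal_ofReal (by linarith)]
  rw [MeasureTheory.integral_Icc_eq_integral_Ioc, ← intervalIntegral.integral_of_le hab.le]
  rw [mul_comm, ← mul_assoc, mul_inv_cancel₀ (by linarith : b - a ≠ 0), one_mul]

lemma Qfun_hasGradientAt (ρ : ℝ → ℝ) (hρc : Continuous ρ) (m : ℕ) (x : ℕ → ℝ) (hx0 : x 0 = 0)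
    (hxlast : x (m + 3) = 1) :
    HasGradientAt (Qfun ρ (m + 1))
      (WithLp.toLp 2 (fun j : Fin (m + 2) => ρ (x ((j : ℕ) + 1)) *
        ((if (j : ℕ) + 1 = 1 then (4 : ℝ) else 2) *
            (Fint ρ (x ((j : ℕ) + 1)) - Fint ρ (x (j : ℕ)))
          - (if (j : ℕ) + 1 = m + 2 then (4 : ℝ) else 2) *
            (Fint ρ (x ((j : ℕ) + 2)) - Fint ρ (x ((j : ℕ) + 1))))) :
        EuclideanSpace ℝ (Fin (m + 2)))
      (WithLp.toLp 2 (fun i : Fin (m + 2) => x ((i : ℕ) + 1)) : EuclideanSpace ℝ (Fin (m + 2))) := by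
  rw [hasGradientAt_iff_hasFDerivAt]
  set p : EuclideanSpace ℝ (Fin (m + 2)) := WithLp.toLp 2 (fun i : Fin (m + 2) => x ((i : ℕ) + 1)) with hp
  have hcoord : ∀ j : Fin (m + 2),
      HasFDerivAt (fun y : EuclideanSpace ℝ (Fin (m + 2)) => Fint ρ (y j))
        (ρ (p j) • (EuclideanSpace.proj j : EuclideanSpace ℝ (Fin (m+2)) →L[ℝ] ℝ)) p := by
    intro j
    have hproj := (EuclideanSpace.proj (𝕜 := ℝ) j).hasFDerivAt (x := p)
    exact HasDerivAt.comp_hasFDerivAt p (Fint_hasDerivAt ρ hρc (p j)) hproj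
  have h1 := HasDerivAt.comp_hasFDerivAt p
    ((hasDerivAt_pow 2 (Fint ρ (p 0))).const_mul (2:ℝ)) (hcoord 0)
  have h2 := HasFDerivAt.sum (u := Finset.univ)
    (fun (i : Fin (m + 1)) (_ : i ∈ Finset.univ) =>
      HasDerivAt.comp_hasFDerivAt p
        (hasDerivAt_pow 2 (Fint ρ (p i.succ) - Fint ρ (p i.castSucc)))
        ((hcoord i.succ).sub (hcoord i.castSucc)))
  have h3 := HasDerivAt.comp_hasFDerivAt p
    (((((hasDerivAt_id (Fint ρ (p (Fin.last (m+1))))).const_sub (Fint ρ 1)).pow 2)).const_mul (2:ℝ))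
    (hcoord (Fin.last (m+1)))
  refine HasFDerivAt.congr_fderiv (((h1.add h2).add h3).congr_of_eventuallyEq
    (Filter.Eventually.of_forall fun y => by simp [Qfun, Finset.sum_apply])) ?_
  refine ContinuousLinearMap.ext fun v => ?_
  simp only [ContinuousLinearMap.add_apply, ContinuousLinearMap.coe_sum', Finset.sum_apply,
    ContinuousLinearMap.smul_apply, ContinuousLinearMap.sub_apply, PiLp.proj_apply,
    smul_eq_mul, pow_one, InnerProductSpace.toDual_apply_apply, PiLp.inner_apply, RCLike.inner_apply,
    conj_trivial]
  simp only [hp, pow_one, id_eq, Nat.cast_ofNat, Fin.val_succ, Fin.coe_castSucc,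
    Fin.val_last, Fin.val_zero]
  have Fint0 : Fint ρ 0 = 0 := intervalIntegral.integral_same
  set S : Fin (m + 2) → ℝ := fun j =>
    2 * (Fint ρ (x ((j : ℕ) + 1)) - Fint ρ (x (j : ℕ))) * (ρ (x ((j : ℕ) + 1)) * v j) with hS
  set C : Fin (m + 2) → ℝ := fun j =>
    2 * (Fint ρ (x ((j : ℕ) + 2)) - Fint ρ (x ((j : ℕ) + 1))) * (ρ (x ((j : ℕ) + 1)) * v j) with hC
  have emid : ∀ i : Fin (m + 1), (2:ℝ) * (Fint ρ (x (↑i + 1 + 1)) - Fint ρ (x (↑i + 1))) ^ (2 - 1) *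
      (ρ (x (↑i + 1 + 1)) * v i.succ - ρ (x (↑i + 1)) * v i.castSucc) = S i.succ - C i.castSucc := by
    intro i
    simp only [hS, hC, Fin.val_succ, Fin.coe_castSucc]
    ring
  have e1 : ∑ i : Fin (m + 1), S i.succ = (∑ j : Fin (m + 2), S j) - S 0 := by
    rw [Fin.sum_univ_succ S]; ring
  have e2 : ∑ i : Fin (m + 1), C i.castSucc = (∑ j : Fin (m + 2), C j) - C (Fin.last (m + 1)) := by
    rw [Fin.sum_univ_castSucc C]; ring
  rw [Finset.sum_congr rfl fun i _ => emid i, Finset.sum_sub_distrib, e1, e2]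
  have hG : ∀ j : Fin (m + 2), (_ : j ∈ Finset.univ) →
      ρ (x (↑j + 1)) *
          ((if (j:ℕ) + 1 = 1 then (4:ℝ) else 2) * (Fint ρ (x (↑j + 1)) - Fint ρ (x ↑j)) -
            (if (j:ℕ) + 1 = m + 2 then (4:ℝ) else 2) * (Fint ρ (x (↑j + 2)) - Fint ρ (x (↑j + 1)))) *
        v j
      = S j - C j
        + (if j = 0 then
            2 * (2 * Fint ρ (x (0 + 1)) ^ (2 - 1)) * (ρ (x (0 + 1)) * v 0) - S 0 else 0)
        + (if j = Fin.last (m + 1) then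
            2 * (2 * (Fint ρ 1 - Fint ρ (x (m + 1 + 1))) ^ (2 - 1) * -1) *
              (ρ (x (m + 1 + 1)) * v (Fin.last (m + 1))) + C (Fin.last (m + 1)) else 0) := by
    intro j _
    rcases eq_or_ne j 0 with hj0 | hj0
    · subst hj0
      have hne : (0 : Fin (m + 2)) ≠ Fin.last (m + 1) := by simp [Fin.ext_iff]
      have hm2 : ¬((0 : ℕ) + 1 = m + 2) := by omega
      simp only [hS, hC, Fin.val_zero, if_neg hne, if_pos rfl, hx0, Fint0, hm2, if_false,
        if_true, eq_self_iff_true, pow_one]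
      norm_num
      ring
    · rcases eq_or_ne j (Fin.last (m + 1)) with hjl | hjl
      · subst hjl
        have h1 : ¬((Fin.last (m + 1) : ℕ) + 1 = 1) := by simp [Fin.val_last]
        have h2 : ((Fin.last (m + 1) : ℕ) + 1 = m + 2) := by simp [Fin.val_last]
        have h3 : ((Fin.last (m + 1) : ℕ)) + 2 = m + 3 := by simp [Fin.val_last]
        simp only [hS, hC, if_neg hj0, if_pos rfl, if_neg h1, if_pos h2, Fin.val_last, h3,
          hxlast, pow_one]
        norm_num
        ring
      · have hv0 : ¬((j : ℕ) + 1 = 1) := by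
          have : (j : ℕ) ≠ 0 := by intro h; exact hj0 (Fin.ext (by simp [h]))
          omega
        have hvl : ¬((j : ℕ) + 1 = m + 2) := by
          have : (j : ℕ) ≠ m + 1 := by simpa [Fin.ext_iff, Fin.val_last] using hjl
          omega
        rw [if_neg hv0, if_neg hvl, if_neg hj0, if_neg hjl]
        simp only [hS, hC]
        ring
  rw [Finset.sum_congr rfl fun j _ => mul_comm (v.ofLp j) _]
  rw [Finset.sum_congr rfl hG, Finset.sum_add_distrib, Finset.sum_add_distrib,
    Finset.sum_sub_distrib, Finset.sum_ite_eq' Finset.univ (0 : Fin (m+2)),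
    Finset.sum_ite_eq' Finset.univ (Fin.last (m+1))]
  simp only [Finset.mem_univ, if_pos]
  ring

/-- Fix a strictly increasing configuration
`0 = x 0 < x 1 < ⋯ < x n < x (n+1) = 1` of `n = m+2 ≥ 2` agents `x 1, …, x n`.  Let
`r k` be uniform on `[x k, x (k+1)]`, `l k` uniform on `[x (k-1), x k]`, and let the
noises `wc k, wl k, wr k` be bounded with mean zero, all jointly independent.  With
`L k = (ρ(l k) + wl k)(x k - x (k-1))`, `R k = (ρ(r k) + wr k)(x (k+1) - x k)` and the
stochastic-gradient vector `ḡ` given by `ḡ₁ = (ρ(x₁)+wc₁)(4L₁ - 2R₁)`,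
`ḡ k = (ρ(x k)+wc k)(2L k - 2R k)` for interior `k`, `ḡ n = (ρ(x n)+wc n)(2L n - 4R n)`,
we have `E[ḡ] = ∇Q(x₁,…,xₙ)`. -/
theorem stmt14 (m : ℕ) (ρ : ℝ → ℝ) (ρmax : ℝ) (hρmax : 1 ≤ ρmax)
    (hρdiff : Differentiable ℝ ρ) (hρ : ∀ z, 1 ≤ ρ z ∧ ρ z ≤ ρmax)
    (x : ℕ → ℝ) (hx0 : x 0 = 0) (hxlast : x (m + 3) = 1)
    (hstrict : ∀ k ≤ m + 2, x k < x (k + 1))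
    {Ω : Type*} [MeasurableSpace Ω] (μ : Measure Ω) [IsProbabilityMeasure μ]
    (r l wc wl wr : ℕ → Ω → ℝ)
    (hrmeas : ∀ k, Measurable (r k)) (hlmeas : ∀ k, Measurable (l k))
    (hwcmeas : ∀ k, Measurable (wc k)) (hwlmeas : ∀ k, Measurable (wl k))
    (hwrmeas : ∀ k, Measurable (wr k))
    (hr : ∀ k, 1 ≤ k → k ≤ m + 2 →
      pdf.IsUniform (r k) (Set.Icc (x k) (x (k + 1))) μ)
    (hl : ∀ k, 1 ≤ k → k ≤ m + 2 →
      pdf.IsUniform (l k) (Set.Icc (x (k - 1)) (x k)) μ)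
    (hwc0 : ∀ k, 1 ≤ k → k ≤ m + 2 → ∫ ω, wc k ω ∂μ = 0)
    (hwl0 : ∀ k, 1 ≤ k → k ≤ m + 2 → ∫ ω, wl k ω ∂μ = 0)
    (hwr0 : ∀ k, 1 ≤ k → k ≤ m + 2 → ∫ ω, wr k ω ∂μ = 0)
    (hbdd : ∃ B : ℝ, ∀ k ω, |wc k ω| ≤ B ∧ |wl k ω| ≤ B ∧ |wr k ω| ≤ B)
    (hindep : ProbabilityTheory.iIndepFun
      (fun p : Fin 5 × Fin (m + 2) => ![r, l, wc, wl, wr] p.1 ((p.2 : ℕ) + 1)) μ)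
    (L R : ℕ → Ω → ℝ)
    (hL : ∀ k, 1 ≤ k → k ≤ m + 2 → ∀ ω,
      L k ω = (ρ (l k ω) + wl k ω) * (x k - x (k - 1)))
    (hR : ∀ k, 1 ≤ k → k ≤ m + 2 → ∀ ω,
      R k ω = (ρ (r k ω) + wr k ω) * (x (k + 1) - x k))
    (gbar : Ω → EuclideanSpace ℝ (Fin (m + 2)))
    (hgbar : ∀ ω (i : Fin (m + 2)),
      gbar ω i = (ρ (x ((i : ℕ) + 1)) + wc ((i : ℕ) + 1) ω) *
        ((if (i : ℕ) + 1 = 1 then (4 : ℝ) else 2) * L ((i : ℕ) + 1) ω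
          - (if (i : ℕ) + 1 = m + 2 then (4 : ℝ) else 2) * R ((i : ℕ) + 1) ω)) :
    ∫ ω, gbar ω ∂μ
      = gradient (Qfun ρ (m + 1))
          (WithLp.toLp 2 (fun i : Fin (m + 2) => x ((i : ℕ) + 1)) : EuclideanSpace ℝ (Fin (m + 2))) := by
  classical
  obtain ⟨B, hB⟩ := hbdd
  have hρc : Continuous ρ := hρdiff.continuous
  set B' : ℝ := max B 0 with hB'
  set K : ℝ := ρmax + B' with hK
  have hB'0 : (0:ℝ) ≤ B' := le_max_right _ _
  have hK1 : 1 ≤ K := by rw [hK]; linarith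
  have habs : ∀ z, |ρ z| ≤ ρmax := fun z => abs_le.2 ⟨by linarith [(hρ z).1], (hρ z).2⟩
  have hmono : ∀ b, b ≤ m + 3 → ∀ a, a ≤ b → x a ≤ x b := by
    intro b hb
    induction b with
    | zero => intro a ha; simp [Nat.le_zero.mp ha]
    | succ n ih =>
      intro a ha
      rcases eq_or_lt_of_le ha with h | h
      · subst h; exact le_rfl
      · exact le_trans (ih (by omega) a (by omega)) (le_of_lt (hstrict n (by omega)))
  have hx01 : ∀ k, k ≤ m + 3 → 0 ≤ x k ∧ x k ≤ 1 := by
    intro k hk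
    constructor
    · rw [← hx0]; exact hmono k hk 0 (by omega)
    · rw [← hxlast]; exact hmono (m+3) le_rfl k hk
  have hgapL : ∀ k, 1 ≤ k → k ≤ m + 2 → 0 ≤ x k - x (k-1) ∧ x k - x (k-1) ≤ 1 := by
    intro k h1 h2
    have ha := hx01 (k-1) (by omega)
    have hb := hx01 k (by omega)
    have h3 := hmono k (by omega) (k-1) (by omega)
    exact ⟨by linarith, by linarith⟩
  have hgapR : ∀ k, 1 ≤ k → k ≤ m + 2 → 0 ≤ x (k+1) - x k ∧ x (k+1) - x k ≤ 1 := by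
    intro k h1 h2
    have ha := hx01 k (by omega)
    have hb := hx01 (k+1) (by omega)
    have h3 := hmono (k+1) (by omega) k (by omega)
    exact ⟨by linarith, by linarith⟩
  have hint : ∀ (f : Ω → ℝ) (c : ℝ), Measurable f → (∀ ω, |f ω| ≤ c) → Integrable f μ := by
    intro f c hf hc
    exact (integrable_const c).mono' hf.aestronglyMeasurable
      (Filter.Eventually.of_forall (by simpa [Real.norm_eq_abs] using hc))
  have hLfun : ∀ k, 1 ≤ k → k ≤ m + 2 →
      L k = fun ω => (ρ (l k ω) + wl k ω) * (x k - x (k - 1)) :=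
    fun k h1 h2 => funext (hL k h1 h2)
  have hRfun : ∀ k, 1 ≤ k → k ≤ m + 2 →
      R k = fun ω => (ρ (r k ω) + wr k ω) * (x (k + 1) - x k) :=
    fun k h1 h2 => funext (hR k h1 h2)
  have hwlbd : ∀ k ω, |ρ (l k ω) + wl k ω| ≤ K := by
    intro k ω
    calc |ρ (l k ω) + wl k ω| ≤ |ρ (l k ω)| + |wl k ω| := abs_add_le _ _
      _ ≤ ρmax + B' := add_le_add (habs _) (le_trans (hB k ω).2.1 (le_max_left _ _))
  have hwrbd : ∀ k ω, |ρ (r k ω) + wr k ω| ≤ K := by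
    intro k ω
    calc |ρ (r k ω) + wr k ω| ≤ |ρ (r k ω)| + |wr k ω| := abs_add_le _ _
      _ ≤ ρmax + B' := add_le_add (habs _) (le_trans (hB k ω).2.2 (le_max_left _ _))
  have hwcbd : ∀ k ω, |ρ (x k) + wc k ω| ≤ K := by
    intro k ω
    calc |ρ (x k) + wc k ω| ≤ |ρ (x k)| + |wc k ω| := abs_add_le _ _
      _ ≤ ρmax + B' := add_le_add (habs _) (le_trans (hB k ω).1 (le_max_left _ _))
  have hLbd : ∀ k, 1 ≤ k → k ≤ m + 2 → ∀ ω, |L k ω| ≤ K := by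
    intro k h1 h2 ω
    rw [hL k h1 h2 ω, abs_mul]
    have h3 := hgapL k h1 h2
    calc |ρ (l k ω) + wl k ω| * |x k - x (k-1)| ≤ K * 1 :=
          mul_le_mul (hwlbd k ω) (by rw [abs_of_nonneg h3.1]; exact h3.2)
            (abs_nonneg _) (by linarith)
      _ = K := mul_one K
  have hRbd : ∀ k, 1 ≤ k → k ≤ m + 2 → ∀ ω, |R k ω| ≤ K := by
    intro k h1 h2 ω
    rw [hR k h1 h2 ω, abs_mul]
    have h3 := hgapR k h1 h2
    calc |ρ (r k ω) + wr k ω| * |x (k+1) - x k| ≤ K * 1 :=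
          mul_le_mul (hwrbd k ω) (by rw [abs_of_nonneg h3.1]; exact h3.2)
            (abs_nonneg _) (by linarith)
      _ = K := mul_one K
  have hLmeas : ∀ k, 1 ≤ k → k ≤ m + 2 → Measurable (L k) := by
    intro k h1 h2
    rw [hLfun k h1 h2]
    exact ((hρc.measurable.comp (hlmeas k)).add (hwlmeas k)).mul_const _
  have hRmeas : ∀ k, 1 ≤ k → k ≤ m + 2 → Measurable (R k) := by
    intro k h1 h2
    rw [hRfun k h1 h2]
    exact ((hρc.measurable.comp (hrmeas k)).add (hwrmeas k)).mul_const _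
  have hik1 : ∀ i : Fin (m + 2), 1 ≤ (i:ℕ) + 1 := fun i => by omega
  have hik2 : ∀ i : Fin (m + 2), (i:ℕ) + 1 ≤ m + 2 := fun i => by have := i.isLt; omega
  have habd : ∀ c : Prop, ∀ [Decidable c], |if c then (4:ℝ) else 2| ≤ 4 := by
    intro c _; split_ifs <;> norm_num
  -- measurability and bound of coordinates
  have hgfun : ∀ i : Fin (m + 2), (fun ω => gbar ω i) =
      fun ω => (ρ (x ((i:ℕ) + 1)) + wc ((i:ℕ) + 1) ω) *
        ((if (i:ℕ) + 1 = 1 then (4:ℝ) else 2) * L ((i:ℕ) + 1) ω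
          - (if (i:ℕ) + 1 = m + 2 then (4:ℝ) else 2) * R ((i:ℕ) + 1) ω) :=
    fun i => funext fun ω => hgbar ω i
  have hgcmeas : ∀ i : Fin (m + 2), Measurable fun ω => gbar ω i := by
    intro i
    rw [hgfun i]
    exact (measurable_const.add (hwcmeas _)).mul
      (((hLmeas _ (hik1 i) (hik2 i)).const_mul _).sub
        ((hRmeas _ (hik1 i) (hik2 i)).const_mul _))
  have hgcbd : ∀ (i : Fin (m + 2)) ω, |gbar ω i| ≤ 8 * K ^ 2 := by
    intro i ω
    rw [hgbar ω i, abs_mul]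
    have h1 : |(if (i:ℕ) + 1 = 1 then (4:ℝ) else 2) * L ((i:ℕ) + 1) ω
        - (if (i:ℕ) + 1 = m + 2 then (4:ℝ) else 2) * R ((i:ℕ) + 1) ω| ≤ 8 * K := by
      have hl1 : |(if (i:ℕ) + 1 = 1 then (4:ℝ) else 2) * L ((i:ℕ) + 1) ω| ≤ 4 * K := by
        rw [abs_mul]
        exact mul_le_mul (habd _) (hLbd _ (hik1 i) (hik2 i) ω) (abs_nonneg _) (by norm_num)
      have hr1 : |(if (i:ℕ) + 1 = m + 2 then (4:ℝ) else 2) * R ((i:ℕ) + 1) ω| ≤ 4 * K := by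
        rw [abs_mul]
        exact mul_le_mul (habd _) (hRbd _ (hik1 i) (hik2 i) ω) (abs_nonneg _) (by norm_num)
      calc |_ - _| ≤ |(if (i:ℕ) + 1 = 1 then (4:ℝ) else 2) * L ((i:ℕ) + 1) ω|
            + |(if (i:ℕ) + 1 = m + 2 then (4:ℝ) else 2) * R ((i:ℕ) + 1) ω| := abs_sub _ _
        _ ≤ 4 * K + 4 * K := add_le_add hl1 hr1
        _ = 8 * K := by ring
    calc |ρ (x ((i:ℕ) + 1)) + wc ((i:ℕ) + 1) ω| * _ ≤ K * (8 * K) :=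
          mul_le_mul (hwcbd _ ω) h1 (abs_nonneg _) (by linarith)
      _ = 8 * K ^ 2 := by ring
  have hgmeas : Measurable gbar := (PiLp.continuous_toLp 2 _).measurable.comp (measurable_pi_iff.mpr hgcmeas)
  have hgInt : Integrable gbar μ := by
    refine (integrable_const (Real.sqrt ((m+2) * (8*K^2)^2))).mono'
      hgmeas.aestronglyMeasurable (Filter.Eventually.of_forall fun ω => ?_)
    rw [EuclideanSpace.norm_eq]
    refine le_trans (Real.sqrt_le_sqrt ?_) le_rfl
    calc ∑ i, ‖gbar ω i‖ ^ 2 ≤ ∑ _i : Fin (m+2), (8*K^2)^2 :=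
          Finset.sum_le_sum fun i _ => by
            rw [Real.norm_eq_abs]
            exact pow_le_pow_left₀ (abs_nonneg _) (hgcbd i ω) 2
      _ = (m+2) * (8*K^2)^2 := by
          rw [Finset.sum_const, Finset.card_univ, Fintype.card_fin, nsmul_eq_mul]
          push_cast; ring
  -- measurability of the independent family
  have hfmeas : ∀ p : Fin 5 × Fin (m + 2),
      Measurable (![r, l, wc, wl, wr] p.1 ((p.2 : ℕ) + 1)) := by
    rintro ⟨j, i⟩
    fin_cases j
    · exact hrmeas _
    · exact hlmeas _
    · exact hwcmeas _
    · exact hwlmeas _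
    · exact hwrmeas _
  -- key per-coordinate expectation
  have key : ∀ (i : Fin (m + 2)) (a b : ℝ),
      (∫ ω, (ρ (x ((i:ℕ) + 1)) + wc ((i:ℕ) + 1) ω) *
          (a * L ((i:ℕ) + 1) ω - b * R ((i:ℕ) + 1) ω) ∂μ)
        = ρ (x ((i:ℕ) + 1)) *
            (a * (Fint ρ (x ((i:ℕ) + 1)) - Fint ρ (x (i:ℕ)))
              - b * (Fint ρ (x ((i:ℕ) + 2)) - Fint ρ (x ((i:ℕ) + 1)))) := by
    intro i a b
    have hk1 := hik1 i
    have hk2 := hik2 i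
    have hkm : (i:ℕ) + 1 - 1 = (i:ℕ) := by omega
    set A : Ω → ℝ := fun ω => ρ (x ((i:ℕ) + 1)) + wc ((i:ℕ) + 1) ω with hA
    have hAmeas : Measurable A := measurable_const.add (hwcmeas _)
    have hintA : Integrable A μ := hint A K hAmeas (fun ω => hwcbd _ ω)
    have hintL : Integrable (L ((i:ℕ) + 1)) μ :=
      hint _ K (hLmeas _ hk1 hk2) (hLbd _ hk1 hk2)
    have hintR : Integrable (R ((i:ℕ) + 1)) μ :=
      hint _ K (hRmeas _ hk1 hk2) (hRbd _ hk1 hk2)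
    -- independence
    have hIl : ProbabilityTheory.IndepFun (fun ω => (l ((i:ℕ)+1) ω, wl ((i:ℕ)+1) ω)) (wc ((i:ℕ)+1)) μ := by
      have h := hindep.indepFun_prodMk hfmeas (⟨1, i⟩ : Fin 5 × Fin (m+2)) ⟨3, i⟩ ⟨2, i⟩
        (by simp) (by simp)
      simpa using h
    have hIr : ProbabilityTheory.IndepFun (fun ω => (r ((i:ℕ)+1) ω, wr ((i:ℕ)+1) ω)) (wc ((i:ℕ)+1)) μ := by
      have h := hindep.indepFun_prodMk hfmeas (⟨0, i⟩ : Fin 5 × Fin (m+2)) ⟨4, i⟩ ⟨2, i⟩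
        (by simp) (by simp)
      simpa using h
    have hIAL : ProbabilityTheory.IndepFun A (L ((i:ℕ)+1)) μ := by
      have h := hIl.symm.comp (φ := fun t => ρ (x ((i:ℕ)+1)) + t)
        (ψ := fun q : ℝ × ℝ => (ρ q.1 + q.2) * (x ((i:ℕ)+1) - x ((i:ℕ)+1-1)))
        (measurable_const.add measurable_id)
        (((hρc.measurable.comp measurable_fst).add measurable_snd).mul_const _)
      rw [hLfun _ hk1 hk2]
      simpa [Function.comp_def] using h
    have hIAR : ProbabilityTheory.IndepFun A (R ((i:ℕ)+1)) μ := by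
      have h := hIr.symm.comp (φ := fun t => ρ (x ((i:ℕ)+1)) + t)
        (ψ := fun q : ℝ × ℝ => (ρ q.1 + q.2) * (x ((i:ℕ)+1+1) - x ((i:ℕ)+1)))
        (measurable_const.add measurable_id)
        (((hρc.measurable.comp measurable_fst).add measurable_snd).mul_const _)
      rw [hRfun _ hk1 hk2]
      simpa [Function.comp_def] using h
    -- expectations of factors
    have hEA : ∫ ω, A ω ∂μ = ρ (x ((i:ℕ)+1)) := by
      rw [hA]
      rw [integral_add (integrable_const _)
        (hint (wc ((i:ℕ)+1)) B' (hwcmeas _)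
          (fun ω => le_trans (hB _ ω).1 (le_max_left _ _)))]
      simp [hwc0 _ hk1 hk2]
    have hEL : ∫ ω, L ((i:ℕ)+1) ω ∂μ = Fint ρ (x ((i:ℕ)+1)) - Fint ρ (x (i:ℕ)) := by
      have hab : x (i:ℕ) < x ((i:ℕ)+1) := hstrict (i:ℕ) (by omega)
      have h1 : (∫ ω, ρ (l ((i:ℕ)+1) ω) ∂μ) * (x ((i:ℕ)+1) - x (i:ℕ))
          = Fint ρ (x ((i:ℕ)+1)) - Fint ρ (x (i:ℕ)) := by
        rw [unif_integral μ hab (hlmeas _) (by simpa [hkm] using hl _ hk1 hk2) ρ hρc,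
          ← Fint_sub ρ hρc]
      have h2 : (fun ω => L ((i:ℕ)+1) ω) =
          fun ω => (ρ (l ((i:ℕ)+1) ω) + wl ((i:ℕ)+1) ω) * (x ((i:ℕ)+1) - x (i:ℕ)) := by
        funext ω; rw [hL _ hk1 hk2 ω, hkm]
      rw [h2, MeasureTheory.integral_mul_const,
        integral_add (hint (fun ω => ρ (l ((i:ℕ)+1) ω)) ρmax (hρc.measurable.comp (hlmeas _)) (fun ω => habs _))
          (hint (wl ((i:ℕ)+1)) B' (hwlmeas _) (fun ω => le_trans (hB _ ω).2.1 (le_max_left _ _))),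
        hwl0 _ hk1 hk2, add_zero, h1]
    have hER : ∫ ω, R ((i:ℕ)+1) ω ∂μ = Fint ρ (x ((i:ℕ)+2)) - Fint ρ (x ((i:ℕ)+1)) := by
      have hab : x ((i:ℕ)+1) < x ((i:ℕ)+1+1) := hstrict ((i:ℕ)+1) (by omega)
      have h1 : (∫ ω, ρ (r ((i:ℕ)+1) ω) ∂μ) * (x ((i:ℕ)+1+1) - x ((i:ℕ)+1))
          = Fint ρ (x ((i:ℕ)+1+1)) - Fint ρ (x ((i:ℕ)+1)) := by
        rw [unif_integral μ hab (hrmeas _) (hr _ hk1 hk2) ρ hρc, ← Fint_sub ρ hρc]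
      have h2 : (fun ω => R ((i:ℕ)+1) ω) =
          fun ω => (ρ (r ((i:ℕ)+1) ω) + wr ((i:ℕ)+1) ω) * (x ((i:ℕ)+1+1) - x ((i:ℕ)+1)) := by
        funext ω; rw [hR _ hk1 hk2 ω]
      have h3 : (i:ℕ)+1+1 = (i:ℕ)+2 := by omega
      rw [h2, MeasureTheory.integral_mul_const,
        integral_add (hint (fun ω => ρ (r ((i:ℕ)+1) ω)) ρmax (hρc.measurable.comp (hrmeas _)) (fun ω => habs _))
          (hint (wr ((i:ℕ)+1)) B' (hwrmeas _) (fun ω => le_trans (hB _ ω).2.2 (le_max_left _ _))),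
        hwr0 _ hk1 hk2, add_zero, h1, h3]
    -- put together
    have hsplit : (fun ω => A ω * (a * L ((i:ℕ)+1) ω - b * R ((i:ℕ)+1) ω)) =
        fun ω => a * (A ω * L ((i:ℕ)+1) ω) - b * (A ω * R ((i:ℕ)+1) ω) := by
      funext ω; ring
    have hintAL : Integrable (fun ω => A ω * L ((i:ℕ)+1) ω) μ :=
      hint _ (K * K) (hAmeas.mul (hLmeas _ hk1 hk2))
        (fun ω => by
          rw [abs_mul]
          exact mul_le_mul (hwcbd _ ω) (hLbd _ hk1 hk2 ω) (abs_nonneg _) (by linarith))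
    have hintAR : Integrable (fun ω => A ω * R ((i:ℕ)+1) ω) μ :=
      hint _ (K * K) (hAmeas.mul (hRmeas _ hk1 hk2))
        (fun ω => by
          rw [abs_mul]
          exact mul_le_mul (hwcbd _ ω) (hRbd _ hk1 hk2 ω) (abs_nonneg _) (by linarith))
    calc ∫ ω, A ω * (a * L ((i:ℕ)+1) ω - b * R ((i:ℕ)+1) ω) ∂μ
        = ∫ ω, (a * (A ω * L ((i:ℕ)+1) ω) - b * (A ω * R ((i:ℕ)+1) ω)) ∂μ := by rw [hsplit]
      _ = a * ∫ ω, A ω * L ((i:ℕ)+1) ω ∂μ - b * ∫ ω, A ω * R ((i:ℕ)+1) ω ∂μ := by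
          rw [integral_sub (hintAL.const_mul a) (hintAR.const_mul b),
            MeasureTheory.integral_const_mul, MeasureTheory.integral_const_mul]
      _ = a * ((∫ ω, A ω ∂μ) * ∫ ω, L ((i:ℕ)+1) ω ∂μ)
            - b * ((∫ ω, A ω ∂μ) * ∫ ω, R ((i:ℕ)+1) ω ∂μ) := by
          have hmulL : ∫ ω, A ω * L ((i:ℕ)+1) ω ∂μ
              = (∫ ω, A ω ∂μ) * ∫ ω, L ((i:ℕ)+1) ω ∂μ :=
            hIAL.integral_mul_eq_mul_integral hintA.aestronglyMeasurable hintL.aestronglyMeasurable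
          have hmulR : ∫ ω, A ω * R ((i:ℕ)+1) ω ∂μ
              = (∫ ω, A ω ∂μ) * ∫ ω, R ((i:ℕ)+1) ω ∂μ :=
            hIAR.integral_mul_eq_mul_integral hintA.aestronglyMeasurable hintR.aestronglyMeasurable
          rw [hmulL, hmulR]
      _ = _ := by rw [hEA, hEL, hER]; ring
  -- conclude
  rw [(Qfun_hasGradientAt ρ hρc m x hx0 hxlast).gradient]
  refine PiLp.ext fun i => ?_
  calc (∫ ω, gbar ω ∂μ) i = ∫ ω, gbar ω i ∂μ :=
        ((EuclideanSpace.proj i).integral_comp_comm hgInt).symm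
    _ = _ := by rw [hgfun i]; exact key i _ _
end

section
/- Let n ≥ 2, M ≥ 0, and 0 = x₀ ≤ x₁ ≤ ⋯ ≤ xₙ ≤ x_{n+1} = 1. Suppose for each k = 1,…,n we are given numbers ρ̂ᶜ_k, ρ̂ˡ_k, ρ̂ʳ_k ∈ [0, ρ_max + M], and define L_k = ρ̂ˡ_k·(x_k − x_{k−1}), R_k = ρ̂ʳ_k·(x_{k+1} − x_k), and the vector ḡ ∈ ℝⁿ with ḡ₁ = ρ̂ᶜ₁·(4L₁ − 2R₁), ḡ_k = ρ̂ᶜ_k·(2L_k − 2R_k) for 2 ≤ k ≤ n−1, and ḡₙ = ρ̂ᶜₙ·(2Lₙ − 4Rₙ). Then ‖ḡ‖₂² ≤ 64·(ρ_max + M)⁴. -/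
/-- Let `n ≥ 2` agents `x 1, …, x n` with boundary conventions
`x 0 = 0`, `x (n+1) = 1`, noisy samples `ρc k, ρl k, ρr k ∈ [0, ρmax + M]`, and
`L k = ρl k ⬝ (x k - x (k-1))`, `R k = ρr k ⬝ (x (k+1) - x k)`.  The stochastic-gradient
vector `ḡ` with `ḡ₁ = ρc 1 ⬝ (4L₁ - 2R₁)`, `ḡ k = ρc k ⬝ (2L k - 2R k)` for interior `k`,
and `ḡ n = ρc n ⬝ (2L n - 4R n)` satisfies `‖ḡ‖₂² ≤ 64 (ρmax + M)⁴`. -/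
theorem stmt15 (n : ℕ) (hn : 2 ≤ n) (ρmax M : ℝ) (hρmax : 1 ≤ ρmax) (hM : 0 ≤ M)
    (x : ℕ → ℝ) (hx0 : x 0 = 0) (hxlast : x (n + 1) = 1)
    (hmono : ∀ k ≤ n, x k ≤ x (k + 1))
    (ρc ρl ρr : ℕ → ℝ)
    (hρc : ∀ k, 1 ≤ k → k ≤ n → ρc k ∈ Set.Icc 0 (ρmax + M))
    (hρl : ∀ k, 1 ≤ k → k ≤ n → ρl k ∈ Set.Icc 0 (ρmax + M))
    (hρr : ∀ k, 1 ≤ k → k ≤ n → ρr k ∈ Set.Icc 0 (ρmax + M))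
    (L R g : ℕ → ℝ)
    (hL : ∀ k, 1 ≤ k → k ≤ n → L k = ρl k * (x k - x (k - 1)))
    (hR : ∀ k, 1 ≤ k → k ≤ n → R k = ρr k * (x (k + 1) - x k))
    (hg : ∀ k, 1 ≤ k → k ≤ n →
      g k = ρc k * ((if k = 1 then (4 : ℝ) else 2) * L k
        - (if k = n then (4 : ℝ) else 2) * R k)) :
    ∑ k ∈ Finset.Icc 1 n, (g k) ^ 2 ≤ 64 * (ρmax + M) ^ 4 := by
  set P := ρmax + M with hPdef
  have hP1 : (1 : ℝ) ≤ P := by simp only [hPdef]; linarith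
  have hP0 : (0 : ℝ) ≤ P := by linarith
  set a : ℕ → ℝ := fun k => x (k + 1) - x (k - 1) with ha
  -- pointwise bound
  have key : ∀ k ∈ Finset.Icc 1 n, g k ^ 2 ≤ 16 * P ^ 4 * a k ^ 2 := by
    intro k hk
    rw [Finset.mem_Icc] at hk
    obtain ⟨hk1, hkn⟩ := hk
    have hkk : k - 1 + 1 = k := by omega
    have hd1 : 0 ≤ x k - x (k - 1) := by
      have h := hmono (k - 1) (by omega)
      rw [hkk] at h; linarith
    have hd2 : 0 ≤ x (k + 1) - x k := by
      have h := hmono k (by omega); linarith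
    obtain ⟨hc0, hc1⟩ := hρc k hk1 hkn
    obtain ⟨hl0, hl1⟩ := hρl k hk1 hkn
    obtain ⟨hr0, hr1⟩ := hρr k hk1 hkn
    have hLk := hL k hk1 hkn
    have hRk := hR k hk1 hkn
    have hLb : 0 ≤ L k ∧ L k ≤ P * (x k - x (k - 1)) := by
      rw [hLk]
      exact ⟨mul_nonneg hl0 hd1, mul_le_mul_of_nonneg_right hl1 hd1⟩
    have hRb : 0 ≤ R k ∧ R k ≤ P * (x (k + 1) - x k) := by
      rw [hRk]
      exact ⟨mul_nonneg hr0 hd2, mul_le_mul_of_nonneg_right hr1 hd2⟩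
    have hgk := hg k hk1 hkn
    set A : ℝ := if k = 1 then (4 : ℝ) else 2 with hA
    set B : ℝ := if k = n then (4 : ℝ) else 2 with hB
    have hAb : 0 ≤ A ∧ A ≤ 4 := by rw [hA]; split_ifs <;> norm_num
    have hBb : 0 ≤ B ∧ B ≤ 4 := by rw [hB]; split_ifs <;> norm_num
    have habs : |A * L k - B * R k| ≤ 4 * P * a k := by
      rw [abs_le]
      constructor
      · have h1 : B * R k ≤ 4 * (P * (x (k + 1) - x k)) := by
          calc B * R k ≤ 4 * R k := mul_le_mul_of_nonneg_right hBb.2 hRb.1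
          _ ≤ 4 * (P * (x (k + 1) - x k)) := by linarith [hRb.2]
        have h2 : 0 ≤ A * L k := mul_nonneg hAb.1 hLb.1
        have : 0 ≤ P * (x k - x (k - 1)) := mul_nonneg hP0 hd1
        simp only [ha]
        nlinarith
      · have h1 : A * L k ≤ 4 * (P * (x k - x (k - 1))) := by
          calc A * L k ≤ 4 * L k := mul_le_mul_of_nonneg_right hAb.2 hLb.1
          _ ≤ 4 * (P * (x k - x (k - 1))) := by linarith [hLb.2]
        have h2 : 0 ≤ B * R k := mul_nonneg hBb.1 hRb.1
        have : 0 ≤ P * (x (k + 1) - x k) := mul_nonneg hP0 hd2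
        simp only [ha]
        nlinarith
    have hgabs : |g k| ≤ P * (4 * P * a k) := by
      rw [hgk, abs_mul]
      have : |ρc k| ≤ P := by rw [abs_of_nonneg hc0]; exact hc1
      exact mul_le_mul this habs (abs_nonneg _) hP0
    have hsq' : g k ^ 2 ≤ (P * (4 * P * a k)) ^ 2 := by
      rw [← sq_abs (g k)]
      exact pow_le_pow_left₀ (abs_nonneg _) hgabs 2
    calc g k ^ 2 ≤ (P * (4 * P * a k)) ^ 2 := hsq'
      _ = 16 * P ^ 4 * a k ^ 2 := by ring
  -- nonnegativity of a
  have ha0 : ∀ k ∈ Finset.Icc 1 n, 0 ≤ a k := by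
    intro k hk
    rw [Finset.mem_Icc] at hk
    have hkk : k - 1 + 1 = k := by omega
    have h1 := hmono (k - 1) (by omega)
    have h2 := hmono k (by omega)
    rw [hkk] at h1
    simp only [ha]
    linarith
  -- sum of a telescopes
  have hsum : ∑ k ∈ Finset.Icc 1 n, a k ≤ 2 := by
    have heq : ∑ k ∈ Finset.Icc 1 n, a k
        = ∑ i ∈ Finset.range n, ((x (i + 2) - x (i + 1)) + (x (i + 1) - x i)) := by
      rw [show Finset.Icc 1 n = Finset.Ico 1 (n + 1) by rfl,
        Finset.sum_Ico_eq_sum_range]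
      apply Finset.sum_congr (by norm_num)
      intro i _
      simp only [ha]
      have h1 : 1 + i - 1 = i := by omega
      have h2 : 1 + i + 1 = i + 2 := by omega
      rw [h1, h2]
      ring
    rw [heq, Finset.sum_add_distrib,
      Finset.sum_range_sub (fun j => x (j + 1)), Finset.sum_range_sub x]
    have h1 := hmono 0 (by omega)
    have h2 := hmono n (le_refl n)
    rw [hx0] at h1
    rw [hxlast] at h2
    linarith
  have hsum0 : 0 ≤ ∑ k ∈ Finset.Icc 1 n, a k := Finset.sum_nonneg ha0
  -- sum of squares bound
  have hsq : ∑ k ∈ Finset.Icc 1 n, a k ^ 2 ≤ 4 := by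
    have h1 : ∑ k ∈ Finset.Icc 1 n, a k ^ 2
        ≤ ∑ k ∈ Finset.Icc 1 n, a k * (∑ j ∈ Finset.Icc 1 n, a j) := by
      apply Finset.sum_le_sum
      intro k hk
      have hle : a k ≤ ∑ j ∈ Finset.Icc 1 n, a j :=
        Finset.single_le_sum ha0 hk
      have := ha0 k hk
      nlinarith
    rw [← Finset.sum_mul] at h1
    nlinarith
  calc ∑ k ∈ Finset.Icc 1 n, g k ^ 2
      ≤ ∑ k ∈ Finset.Icc 1 n, 16 * P ^ 4 * a k ^ 2 := Finset.sum_le_sum key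
    _ = 16 * P ^ 4 * ∑ k ∈ Finset.Icc 1 n, a k ^ 2 := by rw [Finset.mul_sum]
    _ ≤ 16 * P ^ 4 * 4 := by
        apply mul_le_mul_of_nonneg_left hsq
        positivity
    _ = 64 * P ^ 4 := by ring
end

section
/- Let U' ≥ 2 and C ≥ 0 be real numbers, and let (a_t)_{t ≥ 0} be a sequence of real numbers satisfying a₀ ≤ C/U' and, for every integer t ≥ 0, a_{t+1} ≤ (1 − 2/(U' + t))·a_t + C/(U' + t)². Then a_t ≤ C/(U' + t) for every integer t ≥ 0. -/
/-- (Recursion-solving lemma.)  If `U' ≥ 2`, `C ≥ 0`, `a₀ ≤ C/U'`, and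
`a_{t+1} ≤ (1 - 2/(U' + t))·a_t + C/(U' + t)²` for all `t ≥ 0`, then
`a_t ≤ C/(U' + t)` for all `t ≥ 0`. -/
theorem stmt17 (U' C : ℝ) (hU' : 2 ≤ U') (hC : 0 ≤ C) (a : ℕ → ℝ)
    (h0 : a 0 ≤ C / U')
    (hrec : ∀ t : ℕ, a (t + 1) ≤ (1 - 2 / (U' + t)) * a t + C / (U' + t) ^ 2) :
    ∀ t : ℕ, a t ≤ C / (U' + t) := by
  intro t
  induction t with
  | zero => simpa using h0
  | succ t ih =>
    set u : ℝ := U' + t with hu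
    have hu2 : 2 ≤ u := by
      have : (0:ℝ) ≤ t := Nat.cast_nonneg t
      simp only [hu]; linarith
    have hupos : 0 < u := by linarith
    have hfac : 0 ≤ 1 - 2 / u := by
      rw [sub_nonneg, div_le_one hupos]; exact hu2
    have step1 : a (t + 1) ≤ (1 - 2 / u) * (C / u) + C / u ^ 2 :=
      (hrec t).trans (by gcongr)
    have key : (1 - 2 / u) * (C / u) + C / u ^ 2 ≤ C / (u + 1) := by
      have h : ((1 - 2 / u) * (C / u) + C / u ^ 2) * (u + 1) ≤ C := by
        field_simp
        nlinarith
      calc (1 - 2 / u) * (C / u) + C / u ^ 2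
          = (((1 - 2 / u) * (C / u) + C / u ^ 2) * (u + 1)) / (u + 1) := by
            field_simp
        _ ≤ C / (u + 1) := by gcongr
    have : a (t + 1) ≤ C / (u + 1) := step1.trans key
    simpa [hu, add_assoc, Nat.cast_add, Nat.cast_one] using this
end
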